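/- arXiv:2002.10628 — 2 statements merged into one kernel-verified Lean document; each statement's English description precedes it below -/
import Mathlib

section
/- The triple with u₁ = ½ min{x·e,0}² + ¼ max{x·e,0}², u₂ = -¼ min{x·e,0}² + ¼ max{x·e,0}², u₃ = -¼ min{x·e,0}² - ½ max{x·e,0}² (for a unit vector e ∈ ℝᵈ) is a solution to the 3-membrane problem with forces (1,0,-1) on ℝᵈ, i.e., u₁+u₂+u₃=0, u₁ ≥ u₂ ≥ u₃, and Δu₁ = 𝟙_{u₁>u₂} + ½𝟙_{u₁=u₂>u₃}, Δu₂ = ½𝟙_{u₁=u₂>u₃} - ½𝟙_{u₁>u₂=u₃}, Δu₃ = -𝟙_{u₂>u₃} - ½𝟙_{u₁>u₂=u₃}. -/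
open MeasureTheory Metric

noncomputable def lap {d : ℕ} (f : EuclideanSpace ℝ (Fin d) → ℝ) (x : EuclideanSpace ℝ (Fin d)) : ℝ :=
  ∑ i : Fin d, fderiv ℝ (fun y => fderiv ℝ f y (EuclideanSpace.single i 1)) x (EuclideanSpace.single i 1)

def HasDistribLapOn {d : ℕ} (u f : EuclideanSpace ℝ (Fin d) → ℝ)
    (Ω : Set (EuclideanSpace ℝ (Fin d))) : Prop :=
  ∀ φ : EuclideanSpace ℝ (Fin d) → ℝ, ContDiff ℝ (⊤ : ℕ∞) φ → HasCompactSupport φ →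
    tsupport φ ⊆ Ω → ∫ x, u x * lap φ x = ∫ x, f x * φ x

/-- A triple of continuous functions is a solution to the 3-membrane problem with
forces (1,0,-1) on `Ω`: sum zero, ordered, and the Euler–Lagrange system holds
in the sense of distributions. -/
def IsMembraneSolution {d : ℕ} (u₁ u₂ u₃ : EuclideanSpace ℝ (Fin d) → ℝ)
    (Ω : Set (EuclideanSpace ℝ (Fin d))) : Prop :=
  Continuous u₁ ∧ Continuous u₂ ∧ Continuous u₃ ∧
  (∀ x ∈ Ω, u₁ x + u₂ x + u₃ x = 0) ∧
  (∀ x ∈ Ω, u₂ x ≤ u₁ x) ∧ (∀ x ∈ Ω, u₃ x ≤ u₂ x) ∧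
  HasDistribLapOn u₁
    (fun x => (if u₂ x < u₁ x then (1:ℝ) else 0)
      + (1/2) * (if u₁ x = u₂ x ∧ u₃ x < u₂ x then 1 else 0)) Ω ∧
  HasDistribLapOn u₂
    (fun x => (1/2) * (if u₁ x = u₂ x ∧ u₃ x < u₂ x then (1:ℝ) else 0)
      - (1/2) * (if u₂ x < u₁ x ∧ u₂ x = u₃ x then 1 else 0)) Ω ∧
  HasDistribLapOn u₃
    (fun x => -(if u₃ x < u₂ x then (1:ℝ) else 0)
      - (1/2) * (if u₂ x < u₁ x ∧ u₂ x = u₃ x then 1 else 0)) Ω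

/-!
Write `t = ⟪x, e⟫`. Each `uᵢ` is a combination `a · min(t, 0)² + b · max(t, 0)²`, and the phases
`{u₁ > u₂}`, `{u₁ = u₂ > u₃}`, `{u₂ > u₃}`, `{u₁ > u₂ = u₃}` are the half-spaces `{t < 0}` and
`{t > 0}`, so everything reduces to `Δ max(t, 0)² = 2 · 𝟙_{t > 0}` in distributions (the `min`
profile is the `max` profile for `-e`). Integrating along the lines in the `i`-th coordinate
direction, on which `t = c + eᵢ s`, reduces `∂ᵢ²` to the one-dimensional identity
`∫ max(c + ε s, 0)² ψ'' = 2 ε² ∫_{c + ε s > 0} ψ`, which holds because, with `m = max(c + ε s, 0)`,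
`m² ψ' - 2 ε m ψ` is a compactly supported antiderivative of the difference of the two integrands
off the single kink. Summing over `i` uses `∑ eᵢ² = ‖e‖² = 1`.
-/

open Function Set

section OneDim

theorem support_subset_tsupport_of_hasDerivAt {𝕜 F : Type*} [NontriviallyNormedField 𝕜]
    [NormedAddCommGroup F] [NormedSpace 𝕜 F] {ψ ψ' : 𝕜 → F} (hψ : ∀ s, HasDerivAt ψ (ψ' s) s) :
    support ψ' ⊆ tsupport ψ :=
  funext (fun s => (hψ s).deriv) ▸ support_deriv_subset

theorem integral_eq_zero_of_hasDerivAt_off_countable {F : Type*} [NormedAddCommGroup F]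
    [NormedSpace ℝ F] [CompleteSpace F] {G f : ℝ → F} {S : Set ℝ} (hS : S.Countable)
    (hG : Continuous G) (hGs : HasCompactSupport G) (hf : Integrable f)
    (hfs : HasCompactSupport f) (hGf : ∀ s ∉ S, HasDerivAt G (f s) s) :
    ∫ s, f s = 0 := by
  obtain ⟨R, hR0, hR⟩ := (hGs.isCompact.union hfs.isCompact).isBounded.subset_ball_lt 0 0
  rw [Real.ball_eq_Ioo, zero_sub, zero_add] at hR
  have hGR : ∀ s ∉ Ioo (-R) R, G s = 0 := fun s hs =>
    image_eq_zero_of_notMem_tsupport (hs <| hR <| .inl ·)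
  rw [← intervalIntegral.integral_eq_integral_of_support_subset
      (fun s hs => Ioo_subset_Ioc_self (hR (.inr (subset_tsupport _ hs)))),
    integral_eq_of_hasDerivAt_off_countable_of_le G f (by linarith) hS hG.continuousOn
      (fun s hs => hGf s hs.2) hf.intervalIntegrable,
    hGR R (by simp), hGR (-R) (by simp), sub_zero]

theorem hasDerivAt_max_affine_zero {c ε s : ℝ} (hs : s ≠ -c / ε) :
    HasDerivAt (fun s => max (c + ε * s) 0) (if 0 < c + ε * s then ε else 0) s := by
  have hcont : Continuous fun s => c + ε * s := by fun_prop
  rcases lt_trichotomy (c + ε * s) 0 with hneg | hzero | hpos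
  · rw [if_neg hneg.not_gt]
    refine (hasDerivAt_const s (0 : ℝ)).congr_of_eventuallyEq ?_
    filter_upwards [hcont.continuousAt.eventually (gt_mem_nhds hneg)] with r hr
    exact max_eq_right hr.le
  · -- away from `-c / ε` (which is `0` when `ε = 0`), `c + ε * s = 0` forces `ε = 0` and `c = 0`
    have hε : ε = 0 := by
      by_contra hε
      exact hs (by field_simp; linarith)
    have hc : c = 0 := by simpa [hε] using hzero
    simpa [hε, hc] using hasDerivAt_const s (0 : ℝ)
  · rw [if_pos hpos]
    refine (((hasDerivAt_id s).const_mul ε).const_add c).congr_of_eventuallyEq ?_ |>.congr_deriv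
      (mul_one ε)
    filter_upwards [hcont.continuousAt.eventually (lt_mem_nhds hpos)] with r hr
    exact max_eq_left hr.le

theorem hasDerivAt_max_affine_sq_mul_sub {ψ ψ' ψ'' : ℝ → ℝ} {c ε s : ℝ}
    (hψ : HasDerivAt ψ (ψ' s) s) (hψ' : HasDerivAt ψ' (ψ'' s) s) (hs : s ≠ -c / ε) :
    HasDerivAt (fun s => max (c + ε * s) 0 ^ 2 * ψ' s - 2 * ε * max (c + ε * s) 0 * ψ s)
      (max (c + ε * s) 0 ^ 2 * ψ'' s - 2 * ε ^ 2 * {s | 0 < c + ε * s}.indicator ψ s) s := by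
  have hm := hasDerivAt_max_affine_zero hs
  refine (((hm.pow 2).mul hψ').sub ((hm.const_mul (2 * ε)).mul hψ)).congr_deriv ?_
  by_cases hpos : 0 < c + ε * s
  · simp [hpos, indicator_of_mem]
    ring
  · simp [hpos, max_eq_right (not_lt.1 hpos)]

theorem integral_max_affine_sq_mul_eq {ψ ψ' ψ'' : ℝ → ℝ} (c ε : ℝ)
    (hψ : ∀ s, HasDerivAt ψ (ψ' s) s) (hψ' : ∀ s, HasDerivAt ψ' (ψ'' s) s)
    (hψ''c : Continuous ψ'') (hψs : HasCompactSupport ψ) :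
    ∫ s, max (c + ε * s) 0 ^ 2 * ψ'' s = 2 * ε ^ 2 * ∫ s in {s | 0 < c + ε * s}, ψ s := by
  set S : Set ℝ := {s | 0 < c + ε * s}
  have hS : MeasurableSet S := measurableSet_lt measurable_const (by fun_prop)
  have hψc : Continuous ψ := continuous_iff_continuousAt.2 fun s => (hψ s).continuousAt
  have hψ'c : Continuous ψ' := continuous_iff_continuousAt.2 fun s => (hψ' s).continuousAt
  have hsupp' := support_subset_tsupport_of_hasDerivAt hψ
  have hsupp'' : support ψ'' ⊆ tsupport ψ := (support_subset_tsupport_of_hasDerivAt hψ').trans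
    (closure_minimal hsupp' (isClosed_tsupport ψ))
  have hA : Integrable fun s => max (c + ε * s) 0 ^ 2 * ψ'' s :=
    ((by fun_prop : Continuous fun s => max (c + ε * s) 0 ^ 2).mul hψ''c)
      |>.integrable_of_hasCompactSupport (hψs.mono' hsupp'').mul_left
  have hB : Integrable fun s => 2 * ε ^ 2 * S.indicator ψ s :=
    ((hψc.integrable_of_hasCompactSupport hψs).indicator hS).const_mul _
  have hGs : HasCompactSupport fun s =>
      max (c + ε * s) 0 ^ 2 * ψ' s - 2 * ε * max (c + ε * s) 0 * ψ s :=
    ((hψs.mono' hsupp').mul_left (f := fun s => max (c + ε * s) 0 ^ 2)).sub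
      (hψs.mul_left (f := fun s => 2 * ε * max (c + ε * s) 0))
  have hfs : HasCompactSupport fun s =>
      max (c + ε * s) 0 ^ 2 * ψ'' s - 2 * ε ^ 2 * S.indicator ψ s :=
    ((hψs.mono' hsupp'').mul_left (f := fun s => max (c + ε * s) 0 ^ 2)).sub
      ((hψs.mono (support_indicator.trans_subset inter_subset_right)).mul_left
        (f := fun _ => 2 * ε ^ 2))
  have hf0 : ∫ s, (max (c + ε * s) 0 ^ 2 * ψ'' s - 2 * ε ^ 2 * S.indicator ψ s) = 0 :=
    integral_eq_zero_of_hasDerivAt_off_countable (countable_singleton (-c / ε))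
      (by fun_prop) hGs (hA.sub hB) hfs
      (fun s hs => hasDerivAt_max_affine_sq_mul_sub (hψ s) (hψ' s) hs)
  rw [integral_sub hA hB, integral_const_mul, integral_indicator hS, sub_eq_zero] at hf0
  exact hf0

end OneDim

section Lines

variable {E : Type*} [NormedAddCommGroup E] [NormedSpace ℝ E]

theorem Differentiable.hasDerivAt_comp_add_smul {F : Type*} [NormedAddCommGroup F]
    [NormedSpace ℝ F] {g : E → F} (hg : Differentiable ℝ g) (x v : E) (s : ℝ) :
    HasDerivAt (fun s : ℝ => g (x + s • v)) (fderiv ℝ g (x + s • v) v) s := by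
  have hline : HasDerivAt (fun s : ℝ => x + s • v) v s := by
    simpa using ((hasDerivAt_id s).smul_const v).const_add x
  exact (hg _).hasFDerivAt.comp_hasDerivAt s hline

theorem HasCompactSupport.comp_add_smul {G : Type*} [Zero G] [TopologicalSpace G] {g : E → G}
    (hg : HasCompactSupport g) (x : E) {v : E} (hv : v ≠ 0) :
    HasCompactSupport (fun s : ℝ => g (x + s • v)) :=
  hg.comp_isClosedEmbedding ((Homeomorph.addLeft x).isClosedEmbedding.comp
    (isClosedEmbedding_smul_left hv))

theorem ContDiff.fderiv_apply_const {F : Type*} [NormedAddCommGroup F] [NormedSpace ℝ F]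
    {g : E → F} (hg : ContDiff ℝ (⊤ : ℕ∞) g) (v : E) :
    ContDiff ℝ (⊤ : ℕ∞) (fun x => fderiv ℝ g x v) :=
  (hg.fderiv_right (by exact_mod_cast le_top)).clm_apply contDiff_const

theorem integrable_mul_fderiv_fderiv [MeasurableSpace E] [BorelSpace E] {μ : Measure E}
    [IsFiniteMeasureOnCompacts μ] {g φ : E → ℝ} (hg : Continuous g)
    (hφ : ContDiff ℝ (⊤ : ℕ∞) φ) (hφs : HasCompactSupport φ) (v w : E) :
    Integrable (fun x => g x * fderiv ℝ (fun y => fderiv ℝ φ y v) x w) μ :=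
  (hg.mul ((hφ.fderiv_apply_const v).fderiv_apply_const w).continuous)
    |>.integrable_of_hasCompactSupport ((hφs.fderiv_apply ℝ v).fderiv_apply ℝ w).mul_left

end Lines

theorem toLp_insertNth_eq_add_smul_single {m : ℕ} (i : Fin (m + 1)) (s : ℝ) (y : Fin m → ℝ) :
    WithLp.toLp 2 (i.insertNth s y)
      = WithLp.toLp 2 (i.insertNth 0 y) + s • EuclideanSpace.single i (1 : ℝ) := by
  ext j
  refine Fin.succAboveCases i ?_ (fun k => ?_) j
  · simp
  · simp [Fin.succAbove_ne i k]

theorem integral_eq_integral_integral_add_smul_single {m : ℕ} (i : Fin (m + 1))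
    {F : EuclideanSpace ℝ (Fin (m + 1)) → ℝ} (hF : Integrable F) :
    ∫ x, F x = ∫ y : Fin m → ℝ, ∫ s : ℝ,
      F (WithLp.toLp 2 (i.insertNth 0 y) + s • EuclideanSpace.single i 1) := by
  set e := (MeasurableEquiv.piFinSuccAbove (fun _ : Fin (m + 1) => ℝ) i).symm.trans
    (MeasurableEquiv.toLp 2 (Fin (m + 1) → ℝ))
  have he : MeasurePreserving e (volume.prod volume) volume :=
    (EuclideanSpace.volume_preserving_symm_measurableEquiv_toLp _).symm.comp
      (volume_preserving_piFinSuccAbove (fun _ : Fin (m + 1) => ℝ) i).symm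
  rw [← he.integral_comp']
  refine (integral_prod_symm (fun z => F (e z))
    ((he.integrable_comp_emb e.measurableEmbedding).2 hF)).trans ?_
  congr! 3 with y
  funext s
  rw [← toLp_insertNth_eq_add_smul_single]
  rfl

section Laplacian

variable {d : ℕ} {φ : EuclideanSpace ℝ (Fin d) → ℝ}

theorem integral_max_inner_sq_mul_fderiv_fderiv_single (e : EuclideanSpace ℝ (Fin d))
    (hφ : ContDiff ℝ (⊤ : ℕ∞) φ) (hφs : HasCompactSupport φ) (i : Fin d) :
    ∫ x, max (inner ℝ x e) 0 ^ 2 *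
        fderiv ℝ (fun y => fderiv ℝ φ y (EuclideanSpace.single i 1)) x (EuclideanSpace.single i 1)
      = 2 * e i ^ 2 * ∫ x in {x | 0 < inner ℝ x e}, φ x := by
  obtain ⟨m, rfl⟩ : ∃ m, d = m + 1 := ⟨_, (Nat.succ_pred_eq_of_pos i.pos).symm⟩
  set v : EuclideanSpace ℝ (Fin (m + 1)) := EuclideanSpace.single i 1
  have hD : ContDiff ℝ (⊤ : ℕ∞) (fun y => fderiv ℝ φ y v) := hφ.fderiv_apply_const v
  set S := {x : EuclideanSpace ℝ (Fin (m + 1)) | 0 < inner ℝ x e}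
  have hS : MeasurableSet S := measurableSet_lt measurable_const (by fun_prop)
  have hinner : ∀ x (s : ℝ), inner ℝ (x + s • v) e = inner ℝ x e + e i * s := fun x s => by
    simp [v, inner_add_left, real_inner_smul_left, EuclideanSpace.inner_single_left, mul_comm]
  rw [integral_eq_integral_integral_add_smul_single i
      (integrable_mul_fderiv_fderiv (by fun_prop) hφ hφs v v),
    ← integral_indicator hS, integral_eq_integral_integral_add_smul_single i
      ((hφ.continuous.integrable_of_hasCompactSupport hφs).indicator hS),
    ← integral_const_mul]
  refine integral_congr_ae (ae_of_all _ fun y => ?_)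
  set x : EuclideanSpace ℝ (Fin (m + 1)) := WithLp.toLp 2 (i.insertNth 0 y)
  change ∫ s, max (inner ℝ (x + s • v) e) 0 ^ 2 * fderiv ℝ (fun y => fderiv ℝ φ y v) (x + s • v) v
    = 2 * e i ^ 2 * ∫ s, S.indicator φ (x + s • v)
  simp only [hinner]
  rw [integral_max_affine_sq_mul_eq _ _
      ((hφ.differentiable (by simp)).hasDerivAt_comp_add_smul x v)
      ((hD.differentiable (by simp)).hasDerivAt_comp_add_smul x v)
      ((hD.fderiv_apply_const v).continuous.comp (by fun_prop)) (hφs.comp_add_smul x (by simp [v])),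
    ← integral_indicator (measurableSet_lt measurable_const (by fun_prop))]
  congr 2 with s
  simp only [indicator, S, mem_ofPred_eq, hinner]

theorem integrable_mul_lap {g : EuclideanSpace ℝ (Fin d) → ℝ} (hg : Continuous g)
    (hφ : ContDiff ℝ (⊤ : ℕ∞) φ) (hφs : HasCompactSupport φ) :
    Integrable fun x => g x * lap φ x := by
  simp only [lap, Finset.mul_sum]
  exact integrable_finsetSum _ fun i _ => integrable_mul_fderiv_fderiv hg hφ hφs _ _

theorem integral_max_inner_sq_mul_lap {e : EuclideanSpace ℝ (Fin d)} (he : ‖e‖ = 1)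
    (hφ : ContDiff ℝ (⊤ : ℕ∞) φ) (hφs : HasCompactSupport φ) :
    ∫ x, max (inner ℝ x e) 0 ^ 2 * lap φ x = 2 * ∫ x in {x | 0 < inner ℝ x e}, φ x := by
  have hsum : ∑ i, e i ^ 2 = 1 := by rw [← EuclideanSpace.real_norm_sq_eq, he, one_pow]
  simp only [lap, Finset.mul_sum]
  rw [integral_finsetSum _ fun i _ => integrable_mul_fderiv_fderiv (by fun_prop) hφ hφs _ _]
  simp only [integral_max_inner_sq_mul_fderiv_fderiv_single e hφ hφs]
  rw [← Finset.sum_mul, ← Finset.mul_sum, hsum, mul_one]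

theorem integral_min_inner_sq_mul_lap {e : EuclideanSpace ℝ (Fin d)} (he : ‖e‖ = 1)
    (hφ : ContDiff ℝ (⊤ : ℕ∞) φ) (hφs : HasCompactSupport φ) :
    ∫ x, min (inner ℝ x e) 0 ^ 2 * lap φ x = 2 * ∫ x in {x | inner ℝ x e < 0}, φ x := by
  have hmin : ∀ t : ℝ, min t 0 ^ 2 = max (-t) 0 ^ 2 := fun t => by
    rw [← neg_zero, max_neg_neg, neg_sq, neg_zero]
  simpa [hmin, inner_neg_right] using
    integral_max_inner_sq_mul_lap (e := -e) (by rwa [norm_neg]) hφ hφs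

theorem hasDistribLapOn_min_max_inner_sq {e : EuclideanSpace ℝ (Fin d)} (he : ‖e‖ = 1)
    (a b : ℝ) (Ω : Set (EuclideanSpace ℝ (Fin d))) :
    HasDistribLapOn (fun x => a * min (inner ℝ x e) 0 ^ 2 + b * max (inner ℝ x e) 0 ^ 2)
      (fun x => 2 * a * (if inner ℝ x e < 0 then 1 else 0)
        + 2 * b * (if 0 < inner ℝ x e then 1 else 0)) Ω := by
  intro φ hφ hφs _
  have hneg : MeasurableSet {x : EuclideanSpace ℝ (Fin d) | inner ℝ x e < 0} :=
    measurableSet_lt (by fun_prop) measurable_const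
  have hpos : MeasurableSet {x : EuclideanSpace ℝ (Fin d) | 0 < inner ℝ x e} :=
    measurableSet_lt measurable_const (by fun_prop)
  have hφi : Integrable φ := hφ.continuous.integrable_of_hasCompactSupport hφs
  calc ∫ x, (a * min (inner ℝ x e) 0 ^ 2 + b * max (inner ℝ x e) 0 ^ 2) * lap φ x
      = a * (∫ x, min (inner ℝ x e) 0 ^ 2 * lap φ x)
          + b * ∫ x, max (inner ℝ x e) 0 ^ 2 * lap φ x := by
        simp only [add_mul, mul_assoc]
        rw [integral_add ((integrable_mul_lap (by fun_prop) hφ hφs).const_mul a)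
          ((integrable_mul_lap (by fun_prop) hφ hφs).const_mul b), integral_const_mul,
          integral_const_mul]
    _ = ∫ x, (2 * a * {x | inner ℝ x e < 0}.indicator φ x
          + 2 * b * {x | 0 < inner ℝ x e}.indicator φ x) := by
        rw [integral_add ((hφi.indicator hneg).const_mul _) ((hφi.indicator hpos).const_mul _),
          integral_const_mul, integral_const_mul, integral_indicator hneg, integral_indicator hpos,
          integral_min_inner_sq_mul_lap he hφ hφs, integral_max_inner_sq_mul_lap he hφ hφs]
        ring
    _ = _ := by
        congr 1 with x
        simp only [indicator_apply, mem_ofPred_eq]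
        split_ifs <;> ring

end Laplacian

section Phases

variable (t : ℝ)

theorem unstable_u₂_lt_u₁_iff :
    -(1/4) * min t 0 ^ 2 + (1/4) * max t 0 ^ 2 < (1/2) * min t 0 ^ 2 + (1/4) * max t 0 ^ 2
      ↔ t < 0 := by
  rcases lt_or_ge t 0 with h | h
  · simp only [min_eq_left h.le, max_eq_right h.le, h, iff_true]
    nlinarith [sq_pos_of_neg h]
  · simp only [min_eq_right h, max_eq_left h, not_lt.2 h, iff_false]
    norm_num

theorem unstable_u₃_lt_u₂_iff :
    -(1/4) * min t 0 ^ 2 - (1/2) * max t 0 ^ 2 < -(1/4) * min t 0 ^ 2 + (1/4) * max t 0 ^ 2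
      ↔ 0 < t := by
  rcases lt_or_ge 0 t with h | h
  · simp only [min_eq_right h.le, max_eq_left h.le, h, iff_true]
    nlinarith [sq_pos_of_pos h]
  · simp only [min_eq_left h, max_eq_right h, not_lt.2 h, iff_false]
    norm_num

theorem unstable_u₁_eq_u₂_and_u₃_lt_u₂_iff :
    (1/2) * min t 0 ^ 2 + (1/4) * max t 0 ^ 2 = -(1/4) * min t 0 ^ 2 + (1/4) * max t 0 ^ 2
      ∧ -(1/4) * min t 0 ^ 2 - (1/2) * max t 0 ^ 2 < -(1/4) * min t 0 ^ 2 + (1/4) * max t 0 ^ 2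
      ↔ 0 < t := by
  rw [unstable_u₃_lt_u₂_iff, and_iff_right_iff_imp]
  intro h
  rw [min_eq_right h.le]
  ring

theorem unstable_u₂_lt_u₁_and_u₂_eq_u₃_iff :
    -(1/4) * min t 0 ^ 2 + (1/4) * max t 0 ^ 2 < (1/2) * min t 0 ^ 2 + (1/4) * max t 0 ^ 2
      ∧ -(1/4) * min t 0 ^ 2 + (1/4) * max t 0 ^ 2 = -(1/4) * min t 0 ^ 2 - (1/2) * max t 0 ^ 2
      ↔ t < 0 := by
  rw [unstable_u₂_lt_u₁_iff, and_iff_left_iff_imp]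
  intro h
  rw [max_eq_right h.le]
  ring

end Phases

/-- The unstable half-space solution in direction `e` solves the 3-membrane problem
with forces (1,0,-1) on ℝᵈ. -/
theorem stmt1 (d : ℕ) (e : EuclideanSpace ℝ (Fin d)) (he : ‖e‖ = 1) :
    IsMembraneSolution
      (fun x => (1/2) * (min (inner ℝ x e : ℝ) 0)^2 + (1/4) * (max (inner ℝ x e : ℝ) 0)^2)
      (fun x => -(1/4) * (min (inner ℝ x e : ℝ) 0)^2 + (1/4) * (max (inner ℝ x e : ℝ) 0)^2)
      (fun x => -(1/4) * (min (inner ℝ x e : ℝ) 0)^2 - (1/2) * (max (inner ℝ x e : ℝ) 0)^2)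
      Set.univ := by
  refine ⟨by fun_prop, by fun_prop, by fun_prop, fun x _ => by ring, fun x _ => ?_, fun x _ => ?_,
    ?_, ?_, ?_⟩
  · nlinarith [sq_nonneg (min (inner ℝ x e : ℝ) 0)]
  · nlinarith [sq_nonneg (max (inner ℝ x e : ℝ) 0)]
  · convert hasDistribLapOn_min_max_inner_sq he (1/2) (1/4) univ using 1
    funext x
    simp only [unstable_u₂_lt_u₁_iff, unstable_u₁_eq_u₂_and_u₃_lt_u₂_iff]
    ring
  · convert hasDistribLapOn_min_max_inner_sq he (-(1/4)) (1/4) univ using 1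
    funext x
    simp only [unstable_u₁_eq_u₂_and_u₃_lt_u₂_iff, unstable_u₂_lt_u₁_and_u₂_eq_u₃_iff]
    ring
  · convert hasDistribLapOn_min_max_inner_sq he (-(1/4)) (-(1/2)) univ using 1 <;> funext x
    · ring
    · simp only [unstable_u₃_lt_u₂_iff, unstable_u₂_lt_u₁_and_u₂_eq_u₃_iff]
      ring
end

section
/- Let α, β ∈ 𝕊^{d-1} and a, b ∈ ℝ with α₁ = β₁ > 0, α₂ = -β₂ ≥ 0, α_k = β_k = 0 for k ≥ 3. Define P(x) = ½max{x·α - a, 0}², and define Φ by: Φ = P on {x·α - a ≥ x·β - b}; on {x·α - a < x·β - b}, Φ = ¼max{x·β - b,0}² where (2α-β)·x < 2a-b and Φ = ½(x·α - a)² + ½(2α₂x₂ - a + b)² where (2α-β)·x ≥ 2a-b. Then Φ is C^{1,1} on ℝᵈ and |Φ - P| ≤ C(|α-β|² + |a-b|²) in B₁ for a dimensional constant C. -/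
/-!
Write `z = (x·α - a, (x·β - b) - (x·α - a)) ∈ ℝ²`. Then `Φ(x)` is half the squared distance from
`z` to the convex cone `K = {k₀ ≤ 0, k₀ + k₁ ≤ 0}`: outside `K`, the three pieces of `Φ` are where
the metric projection of `z` onto `K` lies on the edge `k₀ = 0`, on the edge `k₀ + k₁ = 0`, and at
the vertex. Half the squared distance to a convex set is differentiable with gradient
`z - proj z`, and the variational inequality characterising `proj` makes this gradient
`1`-Lipschitz; precomposing with the affine map `x ↦ z` preserves `C^{1,1}`. The explicit formulas
give `|Φ - P| ≤ z₁²`, and `|z₁| ≤ |α - β| + |a - b|` on `B₁`.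
-/

open Metric

local notation "ℝ²" => EuclideanSpace ℝ (Fin 2)

section MetricProjection

variable {E : Type*} [NormedAddCommGroup E] [InnerProductSpace ℝ E]
  {K : Set E} {p : E → E}

theorem inner_sub_proj_sub_proj_nonneg (hpK : ∀ z, p z ∈ K)
    (hp : ∀ z, ∀ k ∈ K, inner ℝ (z - p z) (k - p z) ≤ 0) (z z' : E) :
    0 ≤ inner ℝ ((z - p z) - (z' - p z')) (p z - p z') := by
  have h := hp z (p z') (hpK z')
  have h' := hp z' (p z) (hpK z)
  rw [← neg_sub (p z) (p z'), inner_neg_right] at h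
  rw [inner_sub_left]
  linarith

theorem lipschitzWith_one_sub_proj (hpK : ∀ z, p z ∈ K)
    (hp : ∀ z, ∀ k ∈ K, inner ℝ (z - p z) (k - p z) ≤ 0) :
    LipschitzWith 1 fun z => z - p z := by
  refine LipschitzWith.of_dist_le_mul fun z z' => ?_
  rw [NNReal.coe_one, one_mul, dist_eq_norm, dist_eq_norm]
  have hsplit : z - z' = ((z - p z) - (z' - p z')) + (p z - p z') := by abel
  have h := inner_sub_proj_sub_proj_nonneg hpK hp z z'
  have hsq : ‖(z - p z) - (z' - p z')‖ ^ 2 ≤ ‖z - z'‖ ^ 2 := by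
    rw [hsplit, norm_add_sq_real]
    nlinarith [sq_nonneg ‖p z - p z'‖]
  exact (sq_le_sq₀ (norm_nonneg _) (norm_nonneg _)).mp hsq

theorem half_sq_norm_sub_proj_remainder_bounds (hpK : ∀ z, p z ∈ K)
    (hp : ∀ z, ∀ k ∈ K, inner ℝ (z - p z) (k - p z) ≤ 0) (z h : E) :
    0 ≤ ‖z + h - p (z + h)‖ ^ 2 / 2 - ‖z - p z‖ ^ 2 / 2 - inner ℝ (z - p z) h ∧
    ‖z + h - p (z + h)‖ ^ 2 / 2 - ‖z - p z‖ ^ 2 / 2 - inner ℝ (z - p z) h ≤ ‖h‖ ^ 2 / 2 := by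
  set w := z - p z
  set w' := z + h - p (z + h)
  constructor
  · have hh : h = (w' - w) + (p (z + h) - p z) := by simp only [w, w']; abel
    have hvi := hp z (p (z + h)) (hpK _)
    have hid : ‖w'‖ ^ 2 = ‖w‖ ^ 2 + 2 * inner ℝ w (w' - w) + ‖w' - w‖ ^ 2 := by
      rw [← norm_add_sq_real, add_sub_cancel]
    rw [hh, inner_add_right, hid]
    nlinarith [sq_nonneg ‖w' - w‖]
  · have hvi : 0 ≤ inner ℝ w' (p (z + h) - p z) := by
      have := hp (z + h) (p z) (hpK z)
      rw [← neg_sub (p (z + h)) (p z), inner_neg_right] at this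
      linarith
    have hid := norm_add_sq_real w' (p (z + h) - p z)
    have hexp := norm_add_sq_real w h
    have hwh : w + h = w' + (p (z + h) - p z) := by simp only [w, w']; abel
    rw [hwh] at hexp
    nlinarith [sq_nonneg ‖p (z + h) - p z‖]

theorem hasFDerivAt_half_sq_norm_sub_proj (hpK : ∀ z, p z ∈ K)
    (hp : ∀ z, ∀ k ∈ K, inner ℝ (z - p z) (k - p z) ≤ 0) (z : E) :
    HasFDerivAt (fun z => ‖z - p z‖ ^ 2 / 2) (innerSL ℝ (z - p z)) z := by
  rw [hasFDerivAt_iff_isLittleO_nhds_zero]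
  refine Asymptotics.IsBigO.trans_isLittleO (g := fun h : E => ‖h‖ ^ 2) ?_
    (Asymptotics.isLittleO_norm_pow_id one_lt_two)
  refine Asymptotics.IsBigO.of_bound 1 (Filter.Eventually.of_forall fun h => ?_)
  obtain ⟨hlow, hup⟩ := half_sq_norm_sub_proj_remainder_bounds hpK hp z h
  rw [innerSL_apply_apply, Real.norm_eq_abs, norm_pow, norm_norm, one_mul,
    abs_of_nonneg hlow]
  linarith [sq_nonneg ‖h‖]

end MetricProjection

theorem inner_fin_two (x y : ℝ²) : inner ℝ x y = x 0 * y 0 + x 1 * y 1 := by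
  simp only [PiLp.inner_apply, Fin.sum_univ_two, RCLike.inner_apply, conj_trivial]; ring

theorem norm_sq_fin_two (x : ℝ²) : ‖x‖ ^ 2 = x 0 ^ 2 + x 1 ^ 2 := by
  simp [EuclideanSpace.norm_sq_eq, Fin.sum_univ_two]

def cone : Set ℝ² := {k | k 0 ≤ 0 ∧ k 0 + k 1 ≤ 0}

noncomputable def coneProj (z : ℝ²) : ℝ² :=
  if z 1 ≤ 0 then !₂[min (z 0) 0, z 1]
  else if z 0 < z 1 then
    (if z 0 + z 1 ≤ 0 then z else !₂[(z 0 - z 1) / 2, (z 1 - z 0) / 2])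
  else 0

theorem coneProj_mem (z : ℝ²) : coneProj z ∈ cone := by
  unfold coneProj cone
  split_ifs with h1 h2 h3
  · simp only [Set.mem_ofPred_eq, Matrix.cons_val_zero, Matrix.cons_val_one]
    exact ⟨min_le_right _ _, by linarith [min_le_right (z 0) 0]⟩
  · exact ⟨by linarith, h3⟩
  · simp only [Set.mem_ofPred_eq, Matrix.cons_val_zero, Matrix.cons_val_one]
    constructor <;> linarith
  · simp

theorem inner_sub_coneProj_le (z : ℝ²) :
    ∀ k ∈ cone, inner ℝ (z - coneProj z) (k - coneProj z) ≤ 0 := by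
  rintro k ⟨hk0, hk01⟩
  rw [inner_fin_two]
  unfold coneProj
  split_ifs with h1 h2 h3 <;>
    simp only [PiLp.sub_apply, PiLp.zero_apply, Matrix.cons_val_zero, Matrix.cons_val_one,
      Matrix.cons_val_fin_one, sub_self, zero_mul, add_zero, sub_zero, le_refl]
  · rcases le_total (z 0) 0 with h | h
    · simp [min_eq_left h]
    · rw [min_eq_right h]; nlinarith
  · nlinarith
  · nlinarith [mul_nonneg (by linarith : (0:ℝ) ≤ z 0 - z 1) (by linarith : (0:ℝ) ≤ -k 0)]

noncomputable def halfSqDistCone (z : ℝ²) : ℝ := ‖z - coneProj z‖ ^ 2 / 2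

theorem halfSqDistCone_of_nonpos {z : ℝ²} (h : z 1 ≤ 0) :
    halfSqDistCone z = 1 / 2 * max (z 0) 0 ^ 2 := by
  rw [halfSqDistCone, norm_sq_fin_two, coneProj, if_pos h]
  rcases le_total (z 0) 0 with h0 | h0
  · simp [h0]
  · simp [h0, div_eq_inv_mul]

theorem halfSqDistCone_of_lt {z : ℝ²} (h1 : 0 < z 1) (h01 : z 0 < z 1) :
    halfSqDistCone z = 1 / 4 * max (z 0 + z 1) 0 ^ 2 := by
  rw [halfSqDistCone, norm_sq_fin_two, coneProj, if_neg h1.not_ge, if_pos h01]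
  split_ifs with hs
  · simp [max_eq_right hs]
  · simp only [PiLp.sub_apply, Matrix.cons_val_zero, Matrix.cons_val_one, Matrix.cons_val_fin_one,
      max_eq_left (not_le.mp hs).le]
    ring

theorem halfSqDistCone_of_le {z : ℝ²} (h1 : 0 < z 1) (h10 : z 1 ≤ z 0) :
    halfSqDistCone z = 1 / 2 * z 0 ^ 2 + 1 / 2 * z 1 ^ 2 := by
  rw [halfSqDistCone, norm_sq_fin_two, coneProj, if_neg h1.not_ge, if_neg h10.not_gt]
  simp only [sub_zero]; ring

theorem abs_halfSqDistCone_sub_le (z : ℝ²) :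
    |halfSqDistCone z - 1 / 2 * max (z 0) 0 ^ 2| ≤ z 1 ^ 2 := by
  rcases le_or_gt (z 1) 0 with h1 | h1
  · rw [halfSqDistCone_of_nonpos h1, sub_self, abs_zero]; positivity
  rcases lt_or_ge (z 0) (z 1) with h01 | h10
  · rw [halfSqDistCone_of_lt h1 h01, abs_le]
    rcases le_total (z 0) 0 with h0 | h0
    · rw [max_eq_right h0]
      rcases le_total (z 0 + z 1) 0 with hs | hs
      · rw [max_eq_right hs]; constructor <;> nlinarith
      · rw [max_eq_left hs]; constructor <;> nlinarith
    · rw [max_eq_left h0, max_eq_left (by linarith)]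
      constructor <;> nlinarith
  · rw [halfSqDistCone_of_le h1 h10, max_eq_left (by linarith), abs_le]
    constructor <;> nlinarith

theorem contDiff_one_and_lipschitzWith_fderiv_comp_sub
    {E F G : Type*} [NormedAddCommGroup E] [NormedSpace ℝ E] [NormedAddCommGroup F]
    [NormedSpace ℝ F] [NormedAddCommGroup G] [NormedSpace ℝ G]
    {f : F → G} {f' : F → F →L[ℝ] G} (hf : ∀ z, HasFDerivAt f (f' z) z) {K : NNReal}
    (hf' : LipschitzWith K f') (T : E →L[ℝ] F) (c : F) :
    ContDiff ℝ 1 (fun x => f (T x - c)) ∧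
      ∃ L : NNReal, LipschitzWith L (fderiv ℝ fun x => f (T x - c)) := by
  have hderiv : ∀ x, HasFDerivAt (fun x => f (T x - c)) ((f' (T x - c)).comp T) x :=
    fun x => (hf _).comp x (T.hasFDerivAt.sub_const c)
  have hfderiv : fderiv ℝ (fun x => f (T x - c)) = fun x => (f' (T x - c)).comp T :=
    funext fun x => (hderiv x).fderiv
  have hlip := ((ContinuousLinearMap.compL ℝ E F G).flip T).lipschitz.comp
    (hf'.comp (T.lipschitz.sub (LipschitzWith.const c)))
  rw [hfderiv]
  exact ⟨contDiff_one_iff_fderiv.2 ⟨fun x => (hderiv x).differentiableAt, hfderiv ▸ hlip.continuous⟩,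
    _, hlip⟩

theorem contDiff_one_halfSqDistCone_comp_sub {E : Type*} [NormedAddCommGroup E]
    [NormedSpace ℝ E] (T : E →L[ℝ] ℝ²) (c : ℝ²) :
    ContDiff ℝ 1 (fun x => halfSqDistCone (T x - c)) ∧
      ∃ L : NNReal, LipschitzWith L (fderiv ℝ fun x => halfSqDistCone (T x - c)) :=
  contDiff_one_and_lipschitzWith_fderiv_comp_sub
    (hasFDerivAt_half_sq_norm_sub_proj coneProj_mem inner_sub_coneProj_le)
    ((innerSL ℝ).lipschitz.comp (lipschitzWith_one_sub_proj coneProj_mem inner_sub_coneProj_le))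
    T c

section InnerPair

variable {E : Type*} [NormedAddCommGroup E] [InnerProductSpace ℝ E]

noncomputable def innerPairSL (α γ : E) : E →L[ℝ] ℝ² :=
  (innerSL ℝ α).smulRight (EuclideanSpace.single 0 1) +
    (innerSL ℝ γ).smulRight (EuclideanSpace.single 1 1)

@[simp]
theorem innerPairSL_apply_zero (α γ x : E) : innerPairSL α γ x 0 = inner ℝ x α := by
  simp [innerPairSL, real_inner_comm x]

@[simp]
theorem innerPairSL_apply_one (α γ x : E) : innerPairSL α γ x 1 = inner ℝ x γ := by
  simp [innerPairSL, real_inner_comm x]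

end InnerPair

theorem inner_sub_inner_eq_of_reflect {d : ℕ} {α β : EuclideanSpace ℝ (Fin d)} {i₀ i₁ : Fin d}
    (hi₀ : (i₀ : ℕ) = 0) (hi₁ : (i₁ : ℕ) = 1) (h0 : α i₀ = β i₀) (h1 : α i₁ = -β i₁)
    (hk : ∀ k : Fin d, 2 ≤ (k : ℕ) → α k = 0 ∧ β k = 0) (x : EuclideanSpace ℝ (Fin d)) :
    inner ℝ x α - inner ℝ x β = 2 * α i₁ * x i₁ := by
  rw [← inner_sub_right, PiLp.inner_apply, Finset.sum_eq_single i₁]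
  · simp only [PiLp.sub_apply, h1, RCLike.inner_apply, conj_trivial]; ring
  · intro j _ hj
    rcases (by omega : (j : ℕ) = 0 ∨ (j : ℕ) = 1 ∨ 2 ≤ (j : ℕ)) with h | h | h
    · simp [show j = i₀ from Fin.ext (h.trans hi₀.symm), h0]
    · exact absurd (Fin.ext (h.trans hi₁.symm)) hj
    · simp [(hk j h).1, (hk j h).2]
  · simp

theorem sq_inner_sub_sub_le {E : Type*} [NormedAddCommGroup E] [InnerProductSpace ℝ E]
    {x : E} (hx : ‖x‖ ≤ 1) (α β : E) (a b : ℝ) :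
    (inner ℝ x β - inner ℝ x α - (b - a)) ^ 2 ≤ 2 * (‖α - β‖ ^ 2 + |a - b| ^ 2) := by
  have hinner : |inner ℝ x (β - α)| ≤ ‖α - β‖ := by
    calc |inner ℝ x (β - α)| ≤ ‖x‖ * ‖β - α‖ := abs_real_inner_le_norm _ _
      _ ≤ 1 * ‖α - β‖ := by rw [norm_sub_rev]; gcongr
      _ = ‖α - β‖ := one_mul _
  have habs : |inner ℝ x β - inner ℝ x α - (b - a)| ≤ ‖α - β‖ + |a - b| := by
    calc |inner ℝ x β - inner ℝ x α - (b - a)| = |inner ℝ x (β - α) + (a - b)| := by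
          congr 1; rw [inner_sub_right]; ring
      _ ≤ |inner ℝ x (β - α)| + |a - b| := abs_add_le _ _
      _ ≤ ‖α - β‖ + |a - b| := by gcongr
  calc (inner ℝ x β - inner ℝ x α - (b - a)) ^ 2 ≤ (‖α - β‖ + |a - b|) ^ 2 := by
        rw [← sq_abs]; gcongr
    _ ≤ 2 * (‖α - β‖ ^ 2 + |a - b| ^ 2) := add_sq_le

/-- The first component `Φ` of the approximate solution corresponding to stable
half-space profiles: `Φ` is `C^{1,1}` and `|Φ - P| ≤ C(|α-β|² + |a-b|²)` in `B₁`. -/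
theorem stmt16 (d : ℕ) (hd : 2 ≤ d) : ∃ C > (0:ℝ),
    ∀ (α β : EuclideanSpace ℝ (Fin d)) (a b : ℝ),
    ‖α‖ = 1 → ‖β‖ = 1 →
    α ⟨0, by omega⟩ = β ⟨0, by omega⟩ → 0 < α ⟨0, by omega⟩ →
    α ⟨1, by omega⟩ = -β ⟨1, by omega⟩ → 0 ≤ α ⟨1, by omega⟩ →
    (∀ k : Fin d, 2 ≤ (k : ℕ) → α k = 0 ∧ β k = 0) →
    ∀ P Φ : EuclideanSpace ℝ (Fin d) → ℝ,
    (∀ x, P x = (1/2) * (max ((inner ℝ x α : ℝ) - a) 0)^2) →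
    (∀ x, (inner ℝ x β : ℝ) - b ≤ (inner ℝ x α : ℝ) - a → Φ x = P x) →
    (∀ x, (inner ℝ x α : ℝ) - a < (inner ℝ x β : ℝ) - b →
      ((inner ℝ x ((2:ℝ) • α - β) : ℝ) < 2*a - b →
        Φ x = (1/4) * (max ((inner ℝ x β : ℝ) - b) 0)^2) ∧
      (2*a - b ≤ (inner ℝ x ((2:ℝ) • α - β) : ℝ) →
        Φ x = (1/2) * ((inner ℝ x α : ℝ) - a)^2
          + (1/2) * (2 * α ⟨1, by omega⟩ * x ⟨1, by omega⟩ - a + b)^2)) →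
    (ContDiff ℝ 1 Φ ∧ ∃ L : NNReal, LipschitzWith L (fderiv ℝ Φ)) ∧
    ∀ x ∈ ball (0 : EuclideanSpace ℝ (Fin d)) 1,
      |Φ x - P x| ≤ C * (‖α - β‖^2 + |a - b|^2) := by
  refine ⟨2, two_pos, fun α β a b _ _ h0 _ h1 _ hk P Φ hP hΦA hΦBC => ?_⟩
  let T := innerPairSL α (β - α)
  let c : ℝ² := !₂[a, b - a]
  have hz : ∀ x, (T x - c) 0 = inner ℝ x α - a ∧
      (T x - c) 1 = inner ℝ x β - inner ℝ x α - (b - a) := fun x => by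
    simp [T, c, inner_sub_right]
  have hΦ : Φ = fun x => halfSqDistCone (T x - c) := funext fun x => by
    obtain ⟨hz0, hz1⟩ := hz x
    have h2αβ : inner ℝ x ((2:ℝ) • α - β) = 2 * inner ℝ x α - inner ℝ x β := by
      rw [inner_sub_right, real_inner_smul_right]
    rcases le_or_gt (inner ℝ x β - b) (inner ℝ x α - a) with hA | hBC
    · rw [hΦA x hA, hP x, halfSqDistCone_of_nonpos (by linarith), hz0]
    rcases lt_or_ge (inner ℝ x ((2:ℝ) • α - β)) (2 * a - b) with hB | hC
    · rw [(hΦBC x hBC).1 hB, halfSqDistCone_of_lt (by linarith) (by linarith),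
        show (T x - c) 0 + (T x - c) 1 = inner ℝ x β - b by rw [hz0, hz1]; ring]
    · rw [(hΦBC x hBC).2 hC, halfSqDistCone_of_le (by linarith) (by linarith), hz0, hz1,
        ← inner_sub_inner_eq_of_reflect rfl rfl h0 h1 hk]
      ring
  subst hΦ
  refine ⟨contDiff_one_halfSqDistCone_comp_sub T c, fun x hx => ?_⟩
  calc |halfSqDistCone (T x - c) - P x| ≤ (T x - c) 1 ^ 2 := by
        rw [hP x, ← (hz x).1]; exact abs_halfSqDistCone_sub_le _
    _ ≤ 2 * (‖α - β‖ ^ 2 + |a - b| ^ 2) := by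
        rw [(hz x).2]; exact sq_inner_sub_sub_le (mem_ball_zero_iff.mp hx).le α β a b
end
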